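/- Moment-to-domination dichotomy: let Λ ≥ 0 be a random variable (indexed by N) and suppose that for every fixed r ∈ ℕ, E[Λ^{4r}] ≺ A^{2r} + E[Λ^{2r}] B^{2r} for deterministic nonnegative A = A_N, B = B_N. Then Λ ≺ A^{1/2} + B, i.e. for every ε, D > 0, P(Λ > N^ε(A^{1/2} + B)) ≤ C N^{-D}. -/

import Mathlib

open MeasureTheory
open scoped ENNReal

/-! Cauchy–Schwarz gives `E[Λ^{2r}]² ≤ E[Λ^{4r}]`, so by `xy ≤ (x² + y²)/2` the term
`N^ε E[Λ^{2r}] B^{2r}` of the hypothesis can be absorbed into the left-hand side, leaving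
`E[Λ^{4r}] ≤ 2 N^{2ε} (A^{1/2} + B)^{4r}`. Markov's inequality at level `N^ε (A^{1/2} + B)` then
bounds the probability by `2 N^{2ε - 4rε}`, which is at most `2 N^{-D}` once `4rε ≥ D + 2ε`;
the finitely many remaining `N` are absorbed into the constant. -/

section
variable {Ω : Type*} [MeasurableSpace Ω] {μ : Measure Ω}

lemma sq_lintegral_le_lintegral_sq [IsProbabilityMeasure μ] {f : Ω → ℝ≥0∞}
    (hf : AEMeasurable f μ) : (∫⁻ ω, f ω ∂μ) ^ 2 ≤ ∫⁻ ω, f ω ^ 2 ∂μ := by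
  have h := ENNReal.lintegral_mul_le_Lp_mul_Lq μ Real.HolderConjugate.two_two hf
    (aemeasurable_const (b := (1 : ℝ≥0∞)))
  simp only [Pi.mul_apply, mul_one, lintegral_const, measure_univ, one_pow, ENNReal.one_rpow,
    one_div, ENNReal.rpow_two] at h
  simpa using (ENNReal.le_rpow_inv_iff two_pos).mp h

lemma sq_lintegral_ofReal_le_lintegral_ofReal_sq [IsProbabilityMeasure μ] {g : Ω → ℝ}
    (hg : Measurable g) :
    (∫⁻ ω, ENNReal.ofReal (g ω) ∂μ) ^ 2 ≤ ∫⁻ ω, ENNReal.ofReal (g ω ^ 2) ∂μ := by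
  refine (sq_lintegral_le_lintegral_sq hg.ennreal_ofReal.aemeasurable).trans
    (lintegral_mono fun ω => ?_)
  rcases le_total 0 (g ω) with h | h
  · rw [ENNReal.ofReal_pow h]
  · simp [ENNReal.ofReal_of_nonpos h]

lemma measure_lt_le_of_lintegral_pow_le {f : Ω → ℝ} (hf : Measurable f) {p : ℕ} (hp : p ≠ 0)
    {t c : ℝ} (ht : 0 ≤ t) (h : ∫⁻ ω, ENNReal.ofReal (f ω ^ p) ∂μ ≤ ENNReal.ofReal (c * t ^ p)) :
    μ {ω | t < f ω} ≤ ENNReal.ofReal c := by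
  have hfp : Measurable fun ω => ENNReal.ofReal (f ω ^ p) := (hf.pow_const p).ennreal_ofReal
  rcases ht.eq_or_lt with rfl | ht
  · have hzero : ∫⁻ ω, ENNReal.ofReal (f ω ^ p) ∂μ = 0 := by
      simpa [zero_pow hp] using h
    have hnull : μ {ω | 0 < f ω} = 0 :=
      measure_mono_null (fun ω (hω : 0 < f ω) => by simpa using pow_pos hω p)
        ((lintegral_eq_zero_iff hfp).mp hzero)
    exact hnull.trans_le zero_le
  · have htp : 0 < t ^ p := pow_pos ht p
    calc μ {ω | t < f ω}
        ≤ μ {ω | ENNReal.ofReal (t ^ p) ≤ ENNReal.ofReal (f ω ^ p)} :=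
          measure_mono fun ω (hω : t < f ω) =>
            ENNReal.ofReal_le_ofReal (pow_le_pow_left₀ ht.le hω.le p)
      _ ≤ (∫⁻ ω, ENNReal.ofReal (f ω ^ p) ∂μ) / ENNReal.ofReal (t ^ p) :=
          meas_ge_le_lintegral_div hfp.aemeasurable (by simpa using htp) ENNReal.ofReal_ne_top
      _ ≤ ENNReal.ofReal (c * t ^ p) / ENNReal.ofReal (t ^ p) := by gcongr
      _ = ENNReal.ofReal c := by
          rw [← ENNReal.ofReal_div_of_pos htp, mul_div_cancel_right₀ c htp.ne']

lemma le_two_mul_add_sq_of_sq_le_of_le_add_mul {x y a b : ℝ} (hy : y ^ 2 ≤ x)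
    (hx : x ≤ a + y * b) : x ≤ 2 * a + b ^ 2 := by
  nlinarith [sq_nonneg (y - b)]

lemma moment_le_of_sq_le_of_le_mul {m₂ m₄ K a b : ℝ} {r : ℕ} (hr : r ≠ 0) (hK : 1 ≤ K)
    (ha : 0 ≤ a) (hb : 0 ≤ b) (hcs : m₂ ^ 2 ≤ m₄)
    (hm : m₄ ≤ K * (a ^ (2 * r) + m₂ * b ^ (2 * r))) :
    m₄ ≤ 2 * K ^ 2 * (Real.sqrt a + b) ^ (4 * r) := by
  have hsum : a ^ (2 * r) + b ^ (4 * r) ≤ (Real.sqrt a + b) ^ (4 * r) := by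
    have hsqrt : Real.sqrt a ^ (4 * r) = a ^ (2 * r) := by
      rw [show 4 * r = 2 * (2 * r) by omega, pow_mul, Real.sq_sqrt ha]
    rw [← hsqrt]
    exact pow_add_pow_le (Real.sqrt_nonneg a) hb (by omega)
  have hK2 : K ≤ K ^ 2 := by nlinarith
  calc m₄ ≤ 2 * (K * a ^ (2 * r)) + (K * b ^ (2 * r)) ^ 2 :=
        le_two_mul_add_sq_of_sq_le_of_le_add_mul hcs (by linarith)
    _ = 2 * K * a ^ (2 * r) + K ^ 2 * b ^ (4 * r) := by
        rw [mul_pow, ← pow_mul, show 2 * r * 2 = 4 * r by omega]; ring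
    _ ≤ 2 * K ^ 2 * (a ^ (2 * r) + b ^ (4 * r)) := by
        nlinarith [pow_nonneg ha (2 * r), pow_nonneg hb (4 * r)]
    _ ≤ 2 * K ^ 2 * (Real.sqrt a + b) ^ (4 * r) := by gcongr

lemma sq_rpow_le_rpow_neg_mul_rpow_pow {x ε D : ℝ} (hx : 1 ≤ x) {n : ℕ}
    (h : D + 2 * ε ≤ n * ε) : (x ^ ε) ^ 2 ≤ x ^ (-D) * (x ^ ε) ^ n := by
  have hx0 : 0 ≤ x := zero_le_one.trans hx
  rw [← Real.rpow_natCast, ← Real.rpow_natCast, ← Real.rpow_mul hx0, ← Real.rpow_mul hx0,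
    ← Real.rpow_add (zero_lt_one.trans_le hx)]
  exact Real.rpow_le_rpow_of_exponent_le hx (by push_cast; linarith)

lemma measure_gt_le_of_moment_bound [IsProbabilityMeasure μ] {f : Ω → ℝ} (hf : Measurable f)
    {r : ℕ} (hr : r ≠ 0) {K a b c : ℝ} (hK : 1 ≤ K) (ha : 0 ≤ a) (hb : 0 ≤ b)
    (hc : 2 * K ^ 2 ≤ c * K ^ (4 * r))
    (hfin : ∫⁻ ω, ENNReal.ofReal (f ω ^ (2 * r)) ∂μ ≠ ⊤)
    (hmom : ∫⁻ ω, ENNReal.ofReal (f ω ^ (4 * r)) ∂μ ≤ ENNReal.ofReal K *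
      (ENNReal.ofReal (a ^ (2 * r)) +
        (∫⁻ ω, ENNReal.ofReal (f ω ^ (2 * r)) ∂μ) * ENNReal.ofReal (b ^ (2 * r)))) :
    μ {ω | f ω > K * (Real.sqrt a + b)} ≤ ENNReal.ofReal c := by
  set s := Real.sqrt a + b
  set m₂ := ∫⁻ ω, ENNReal.ofReal (f ω ^ (2 * r)) ∂μ
  set m₄ := ∫⁻ ω, ENNReal.ofReal (f ω ^ (4 * r)) ∂μ
  have hK0 : 0 ≤ K := zero_le_one.trans hK
  have hm₄ : m₄ ≠ ⊤ := ne_top_of_le_ne_top (by finiteness) hmom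
  have hcs : m₂.toReal ^ 2 ≤ m₄.toReal := by
    have h := sq_lintegral_ofReal_le_lintegral_ofReal_sq (μ := μ) (hf.pow_const (2 * r))
    simp_rw [← pow_mul, show 2 * r * 2 = 4 * r by omega] at h
    simpa using ENNReal.toReal_mono hm₄ h
  have hreal : m₄.toReal ≤ K * (a ^ (2 * r) + m₂.toReal * b ^ (2 * r)) := by
    have := ENNReal.toReal_mono (by finiteness) hmom
    rwa [ENNReal.toReal_mul, ENNReal.toReal_add (by finiteness) (by finiteness), ENNReal.toReal_mul,
      ENNReal.toReal_ofReal hK0, ENNReal.toReal_ofReal (by positivity),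
      ENNReal.toReal_ofReal (by positivity)] at this
  have hbound : m₄.toReal ≤ c * (K * s) ^ (4 * r) := by
    calc m₄.toReal ≤ 2 * K ^ 2 * s ^ (4 * r) :=
          moment_le_of_sq_le_of_le_mul hr hK ha hb hcs hreal
      _ ≤ c * K ^ (4 * r) * s ^ (4 * r) := by gcongr
      _ = c * (K * s) ^ (4 * r) := by rw [mul_pow, mul_assoc]
  refine measure_lt_le_of_lintegral_pow_le (p := 4 * r) hf (by omega) (by positivity) ?_
  exact (ENNReal.ofReal_toReal hm₄).symm.trans_le (ENNReal.ofReal_le_ofReal hbound)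

end

lemma exists_forall_le_mul_rpow_neg_of_le_one {p : ℕ → ℝ≥0∞} (hp : ∀ N, p N ≤ 1) {c D : ℝ}
    (hD : 0 ≤ D) {N₀ : ℕ} (h : ∀ N ≥ N₀, p N ≤ ENNReal.ofReal (c * (N : ℝ) ^ (-D))) :
    ∃ C : ℝ, ∀ N : ℕ, 1 ≤ N → p N ≤ ENNReal.ofReal (C * (N : ℝ) ^ (-D)) := by
  refine ⟨max ((N₀ : ℝ) ^ D) c, fun N hN => ?_⟩
  have hN0 : (0 : ℝ) < N := by exact_mod_cast hN
  have hND : 0 ≤ (N : ℝ) ^ (-D) := Real.rpow_nonneg hN0.le _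
  rcases le_or_gt N₀ N with hN₀ | hN₀
  · exact (h N hN₀).trans
      (ENNReal.ofReal_le_ofReal (mul_le_mul_of_nonneg_right (le_max_right _ _) hND))
  · refine (hp N).trans (ENNReal.one_le_ofReal.mpr ?_)
    have hpow : (N : ℝ) ^ D ≤ (N₀ : ℝ) ^ D :=
      Real.rpow_le_rpow hN0.le (by exact_mod_cast hN₀.le) hD
    have hinv : (N : ℝ) ^ D * (N : ℝ) ^ (-D) = 1 := by
      rw [← Real.rpow_add hN0, add_neg_cancel, Real.rpow_zero]
    calc 1 = (N : ℝ) ^ D * (N : ℝ) ^ (-D) := hinv.symm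
      _ ≤ max ((N₀ : ℝ) ^ D) c * (N : ℝ) ^ (-D) :=
        mul_le_mul_of_nonneg_right (hpow.trans (le_max_left _ _)) hND

theorem moment_dichotomy_general {Ω : Type*} [MeasurableSpace Ω] (μ : Measure Ω)
    [IsProbabilityMeasure μ]
    (Lam : ℕ → Ω → ℝ) (A B : ℕ → ℝ)
    (hA : ∀ N, 0 ≤ A N) (hB : ∀ N, 0 ≤ B N)
    (hmeas : ∀ N, Measurable (Lam N))
    (hfin : ∀ r N : ℕ, ∫⁻ ω, ENNReal.ofReal (Lam N ω ^ r) ∂μ < ⊤)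
    (hmom : ∀ r : ℕ, ∀ ε > (0 : ℝ), ∃ N₀ : ℕ, ∀ N ≥ N₀,
      ∫⁻ ω, ENNReal.ofReal (Lam N ω ^ (4 * r)) ∂μ
        ≤ ENNReal.ofReal ((N : ℝ) ^ ε) *
          (ENNReal.ofReal (A N ^ (2 * r)) +
            (∫⁻ ω, ENNReal.ofReal (Lam N ω ^ (2 * r)) ∂μ) * ENNReal.ofReal (B N ^ (2 * r)))) :
    ∀ ε > (0 : ℝ), ∀ D > (0 : ℝ), ∃ C : ℝ, ∀ N : ℕ, 1 ≤ N →
      μ {ω | Lam N ω > (N : ℝ) ^ ε * (Real.sqrt (A N) + B N)}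
        ≤ ENNReal.ofReal (C * (N : ℝ) ^ (-D)) := by
  intro ε hε D hD
  obtain ⟨r, hr⟩ := exists_nat_ge ((D + 2 * ε) / (4 * ε))
  have hrε : D + 2 * ε ≤ ((4 * r : ℕ) : ℝ) * ε := by
    rw [div_le_iff₀ (by positivity)] at hr
    push_cast
    linarith
  have hr0 : r ≠ 0 := by
    rintro rfl
    simp only [mul_zero, CharP.cast_eq_zero, zero_mul] at hrε
    linarith
  obtain ⟨N₀, hN₀⟩ := hmom r ε hε
  refine exists_forall_le_mul_rpow_neg_of_le_one (fun N => prob_le_one) hD.le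
    (N₀ := max N₀ 1) (c := 2) fun N hN => ?_
  have hN1 : (1 : ℝ) ≤ N := by exact_mod_cast (le_max_right _ _).trans hN
  refine measure_gt_le_of_moment_bound (hmeas N) hr0 (Real.one_le_rpow hN1 hε.le) (hA N) (hB N)
    ?_ (hfin _ N).ne (hN₀ N ((le_max_left _ _).trans hN))
  linarith [sq_rpow_le_rpow_neg_mul_rpow_pow hN1 hrε]

/-- **Moment-to-domination dichotomy.** Let `Λ_N ≥ 0` be random variables with
finite moments, and suppose that for every fixed `r ∈ ℕ` and every `ε > 0`,
for all large `N`,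
`E[Λ^{4r}] ≤ N^ε (A^{2r} + E[Λ^{2r}] B^{2r})`
with `A, B` deterministic nonnegative. Then `Λ ≺ A^{1/2} + B`: for every
`ε, D > 0` there is `C` with `ℙ(Λ_N > N^ε(A_N^{1/2} + B_N)) ≤ C N^{-D}` for
all `N ≥ 1`. -/
theorem moment_dichotomy {Ω : Type*} [MeasurableSpace Ω] (μ : Measure Ω)
    [IsProbabilityMeasure μ]
    (Lam : ℕ → Ω → ℝ) (A B : ℕ → ℝ)
    (hLam : ∀ N ω, 0 ≤ Lam N ω) (hA : ∀ N, 0 ≤ A N) (hB : ∀ N, 0 ≤ B N)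
    (hmeas : ∀ N, Measurable (Lam N))
    (hfin : ∀ r N : ℕ, ∫⁻ ω, ENNReal.ofReal (Lam N ω ^ r) ∂μ < ⊤)
    (hmom : ∀ r : ℕ, ∀ ε > (0 : ℝ), ∃ N₀ : ℕ, ∀ N ≥ N₀,
      ∫⁻ ω, ENNReal.ofReal (Lam N ω ^ (4 * r)) ∂μ
        ≤ ENNReal.ofReal ((N : ℝ) ^ ε) *
          (ENNReal.ofReal (A N ^ (2 * r)) +
            (∫⁻ ω, ENNReal.ofReal (Lam N ω ^ (2 * r)) ∂μ) * ENNReal.ofReal (B N ^ (2 * r)))) :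
    ∀ ε > (0 : ℝ), ∀ D > (0 : ℝ), ∃ C : ℝ, ∀ N : ℕ, 1 ≤ N →
      μ {ω | Lam N ω > (N : ℝ) ^ ε * (Real.sqrt (A N) + B N)}
        ≤ ENNReal.ofReal (C * (N : ℝ) ^ (-D)) :=
  moment_dichotomy_general μ Lam A B hA hB hmeas hfin hmom
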